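/- Assume C ⊆ H^T is invariant under multiplication by positive scalars and F_λ is nonempty. If λ = (λ₁,…,λ_T) and μ = (μ₁,…,μ_T) satisfy 0 < λ_t ≤ 2μ_t for every t, then R(F_μ) ≤ √2 · R(F_λ). -/

import Mathlib

/-- The real sign `±1` associated with a Boolean Rademacher variable. -/
noncomputable def sgn (b : Bool) : ℝ := if b then 1 else -1

/-- The hypothesis class `F_λ = {w ∈ C : ∑_t λ_t ‖w_t‖² ≤ R}`. -/
def hypClass {H : Type*} [NormedAddCommGroup H] [InnerProductSpace ℝ H]
    {T : ℕ} (C : Set (Fin T → H)) (R : ℝ) (lam : Fin T → ℝ) : Set (Fin T → H) :=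
  {w | w ∈ C ∧ ∑ t, lam t * ‖w t‖ ^ 2 ≤ R}

/-- Empirical Rademacher complexity
`R(F) = (2/(TN)) E_σ[sup_{w ∈ F} ∑_t ∑_i σ_t^i ⟨w_t, φ_{t,i}⟩]`,
the expectation being the average over all sign patterns `σ ∈ {±1}^{T×N}`. -/
noncomputable def radComplexity {H : Type*} [NormedAddCommGroup H] [InnerProductSpace ℝ H]
    {T N : ℕ} (φ : Fin T → Fin N → H) (F : Set (Fin T → H)) : ℝ :=
  (2 / (T * N)) * ((1 / 2 ^ (T * N)) *
    ∑ σ : Fin T → Fin N → Bool,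
      sSup ((fun w : Fin T → H => ∑ t, ∑ i, sgn (σ t i) * (inner ℝ (w t) (φ t i) : ℝ)) '' F))

lemma hyp_bdd {H : Type*} [NormedAddCommGroup H] [InnerProductSpace ℝ H]
    {T N : ℕ} (φ : Fin T → Fin N → H) (C : Set (Fin T → H)) (R : ℝ) (hR : 0 ≤ R)
    (lam : Fin T → ℝ) (hlam : ∀ t, 0 < lam t) (σ : Fin T → Fin N → Bool) :
    BddAbove ((fun w : Fin T → H => ∑ t, ∑ i, sgn (σ t i) * (inner ℝ (w t) (φ t i) : ℝ)) ''
      hypClass C R lam) := by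
  refine ⟨∑ t, ∑ i, Real.sqrt (R / lam t) * ‖φ t i‖, ?_⟩
  rintro x ⟨w, ⟨hwC, hw⟩, rfl⟩
  refine Finset.sum_le_sum fun t _ => Finset.sum_le_sum fun i _ => ?_
  have h1 : lam t * ‖w t‖ ^ 2 ≤ R := by
    refine le_trans ?_ hw
    exact Finset.single_le_sum (f := fun t => lam t * ‖w t‖ ^ 2)
      (fun t _ => mul_nonneg (hlam t).le (by positivity)) (Finset.mem_univ t)
  have hwt : ‖w t‖ ≤ Real.sqrt (R / lam t) := by
    rw [show (R / lam t) = R / lam t from rfl, Real.le_sqrt (norm_nonneg _),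
      le_div_iff₀ (hlam t)]
    · nlinarith
    · exact div_nonneg hR (hlam t).le
  calc sgn (σ t i) * (inner ℝ (w t) (φ t i) : ℝ)
      ≤ |(inner ℝ (w t) (φ t i) : ℝ)| := by
        rcases (σ t i) with _ | _ <;> simp [sgn] <;>
          [skip; exact le_abs_self _]
        · linarith [neg_abs_le (inner ℝ (w t) (φ t i) : ℝ)]
    _ ≤ ‖w t‖ * ‖φ t i‖ := abs_real_inner_le_norm _ _
    _ ≤ Real.sqrt (R / lam t) * ‖φ t i‖ :=
        mul_le_mul_of_nonneg_right hwt (norm_nonneg _)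


/-- if `C` is invariant under multiplication by positive scalars, `F_λ`
is nonempty, and `0 < λ_t ≤ 2 μ_t` for every `t`, then `R(F_μ) ≤ √2 · R(F_λ)`. -/
theorem radComplexity_two_scaling {H : Type*} [NormedAddCommGroup H] [InnerProductSpace ℝ H]
    {T N : ℕ} (hT : 0 < T) (hN : 0 < N) (φ : Fin T → Fin N → H)
    (C : Set (Fin T → H))
    (hC : ∀ w ∈ C, ∀ s : ℝ, 0 < s → (fun t => s • w t) ∈ C)
    (R : ℝ) (hR : 0 < R) (lam μ : Fin T → ℝ)
    (h : ∀ t, 0 < lam t ∧ lam t ≤ 2 * μ t)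
    (hne : (hypClass C R lam).Nonempty) :
    radComplexity φ (hypClass C R μ) ≤ Real.sqrt 2 * radComplexity φ (hypClass C R lam) := by
  classical
  have hμpos : ∀ t, 0 < μ t := fun t => by nlinarith [(h t).1, (h t).2]
  have hsqrt : (0:ℝ) < Real.sqrt 2 := by positivity
  set s : ℝ := (Real.sqrt 2)⁻¹ with hs
  have hspos : 0 < s := by positivity
  have hss : Real.sqrt 2 * s = 1 := mul_inv_cancel₀ (ne_of_gt hsqrt)
  have hs2 : s ^ 2 = 1 / 2 := by
    rw [hs, inv_pow, Real.sq_sqrt (by norm_num : (0:ℝ) ≤ 2)]; norm_num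
  -- F_μ nonempty
  have hneμ : (hypClass C R μ).Nonempty := by
    obtain ⟨w0, hw0C, hw0⟩ := hne
    set M : ℝ := ∑ t, μ t * ‖w0 t‖ ^ 2 with hM
    have hM0 : 0 ≤ M := Finset.sum_nonneg fun t _ => mul_nonneg (hμpos t).le (by positivity)
    rcases eq_or_lt_of_le hM0 with hMeq | hMpos
    · exact ⟨w0, hw0C, by rw [← hM, ← hMeq]; exact le_of_lt hR⟩
    · set s0 := Real.sqrt (R / M) with hs0
      have hs0pos : 0 < s0 := Real.sqrt_pos.mpr (div_pos hR hMpos)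
      refine ⟨fun t => s0 • w0 t, hC w0 hw0C s0 hs0pos, ?_⟩
      have : ∑ t, μ t * ‖s0 • w0 t‖ ^ 2 = s0 ^ 2 * M := by
        rw [hM, Finset.mul_sum]
        refine Finset.sum_congr rfl fun t _ => ?_
        rw [norm_smul, Real.norm_eq_abs, mul_pow, sq_abs]
        ring
      rw [this, hs0, Real.sq_sqrt (div_nonneg hR.le hM0)]
      rw [div_mul_cancel₀]
      exact ne_of_gt hMpos
  -- key per σ
  have key : ∀ σ : Fin T → Fin N → Bool,
      sSup ((fun w : Fin T → H => ∑ t, ∑ i, sgn (σ t i) * (inner ℝ (w t) (φ t i) : ℝ)) ''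
        hypClass C R μ)
      ≤ Real.sqrt 2 *
        sSup ((fun w : Fin T → H => ∑ t, ∑ i, sgn (σ t i) * (inner ℝ (w t) (φ t i) : ℝ)) ''
          hypClass C R lam) := by
    intro σ
    apply csSup_le (hneμ.image _)
    · rintro x ⟨w, ⟨hwC, hw⟩, rfl⟩
      -- s • w ∈ F_lam
      have hmem : (fun t => s • w t) ∈ hypClass C R lam := by
        refine ⟨hC w hwC s hspos, ?_⟩
        have heq : ∑ t, lam t * ‖s • w t‖ ^ 2 = (1/2) * ∑ t, lam t * ‖w t‖ ^ 2 := by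
          rw [Finset.mul_sum]
          refine Finset.sum_congr rfl fun t _ => ?_
          rw [norm_smul, Real.norm_eq_abs, mul_pow, sq_abs, hs2]; ring
        rw [heq]
        calc (1/2) * ∑ t, lam t * ‖w t‖ ^ 2
            ≤ (1/2) * ∑ t, 2 * μ t * ‖w t‖ ^ 2 := by
              apply mul_le_mul_of_nonneg_left _ (by norm_num)
              refine Finset.sum_le_sum fun t _ => ?_
              exact mul_le_mul_of_nonneg_right (h t).2 (by positivity)
          _ = ∑ t, μ t * ‖w t‖ ^ 2 := by
              rw [Finset.mul_sum]; exact Finset.sum_congr rfl fun t _ => by ring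
          _ ≤ R := hw
      have hval : (∑ t, ∑ i, sgn (σ t i) * (inner ℝ ((fun t => s • w t) t) (φ t i) : ℝ))
          = s * ∑ t, ∑ i, sgn (σ t i) * (inner ℝ (w t) (φ t i) : ℝ) := by
        simp only [Finset.mul_sum]
        refine Finset.sum_congr rfl fun t _ => Finset.sum_congr rfl fun i _ => ?_
        rw [real_inner_smul_left]; ring
      have hle : s * (∑ t, ∑ i, sgn (σ t i) * (inner ℝ (w t) (φ t i) : ℝ))
          ≤ sSup ((fun w : Fin T → H => ∑ t, ∑ i, sgn (σ t i) * (inner ℝ (w t) (φ t i) : ℝ)) ''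
            hypClass C R lam) := by
        rw [← hval]
        exact le_csSup (hyp_bdd φ C R hR.le lam (fun t => (h t).1) σ)
          ⟨_, hmem, rfl⟩
      calc (∑ t, ∑ i, sgn (σ t i) * (inner ℝ (w t) (φ t i) : ℝ))
          = Real.sqrt 2 * (s * ∑ t, ∑ i, sgn (σ t i) * (inner ℝ (w t) (φ t i) : ℝ)) := by
            rw [← mul_assoc, hss, one_mul]
        _ ≤ _ := mul_le_mul_of_nonneg_left hle hsqrt.le
  -- assemble
  unfold radComplexity
  have hc1 : (0:ℝ) ≤ 2 / (T * N) := by positivity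
  have hc2 : (0:ℝ) ≤ 1 / 2 ^ (T * N) := by positivity
  have hsum : (∑ σ : Fin T → Fin N → Bool,
      sSup ((fun w : Fin T → H => ∑ t, ∑ i, sgn (σ t i) * (inner ℝ (w t) (φ t i) : ℝ)) ''
        hypClass C R μ))
      ≤ Real.sqrt 2 * ∑ σ : Fin T → Fin N → Bool,
        sSup ((fun w : Fin T → H => ∑ t, ∑ i, sgn (σ t i) * (inner ℝ (w t) (φ t i) : ℝ)) ''
          hypClass C R lam) := by
    rw [Finset.mul_sum]
    exact Finset.sum_le_sum fun σ _ => key σ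
  calc (2 / (T * N) : ℝ) * ((1 / 2 ^ (T * N)) * ∑ σ : Fin T → Fin N → Bool,
        sSup ((fun w : Fin T → H => ∑ t, ∑ i, sgn (σ t i) * (inner ℝ (w t) (φ t i) : ℝ)) ''
          hypClass C R μ))
      ≤ (2 / (T * N)) * ((1 / 2 ^ (T * N)) * (Real.sqrt 2 * ∑ σ : Fin T → Fin N → Bool,
        sSup ((fun w : Fin T → H => ∑ t, ∑ i, sgn (σ t i) * (inner ℝ (w t) (φ t i) : ℝ)) ''
          hypClass C R lam))) := by
        exact mul_le_mul_of_nonneg_left (mul_le_mul_of_nonneg_left hsum hc2) hc1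
    _ = Real.sqrt 2 * ((2 / (T * N)) * ((1 / 2 ^ (T * N)) * ∑ σ : Fin T → Fin N → Bool,
        sSup ((fun w : Fin T → H => ∑ t, ∑ i, sgn (σ t i) * (inner ℝ (w t) (φ t i) : ℝ)) ''
          hypClass C R lam))) := by ring
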